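/- The spin-wave free energy F(ŵ) = (1/2) ∫_{[-π,π]²} log D̂_k(ŵ) dk/(2π)², where D̂_k(ŵ) = ŵ_z² |1-e^{ik₁}|² + ŵ_x² |1-e^{ik₂}|² and ŵ = (ŵ_x, 0, ŵ_z) is a unit vector in the xz-plane, is minimized over such unit vectors only by ŵ = ±ê_x and ŵ = ±ê_z. -/

import Mathlib

/-- The spin-wave free energy of the 2D orbital-compass model for a direction
`ŵ = (ŵ_x, 0, ŵ_z)` in the `xz`-plane:
`F(ŵ) = (1/2) ∫_{[-π,π]²} log D̂_k(ŵ) dk/(2π)²` where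
`D̂_k(ŵ) = ŵ_z²|1-e^{ik₁}|² + ŵ_x²|1-e^{ik₂}|²`. -/
noncomputable def spinWaveF (wx wz : ℝ) : ℝ :=
  (1 / 2) * (1 / (2 * Real.pi) ^ 2) *
    ∫ k1 in (-Real.pi)..Real.pi, ∫ k2 in (-Real.pi)..Real.pi,
      Real.log (wz ^ 2 * ‖1 - Complex.exp (Complex.I * (k1 : ℂ))‖ ^ 2
        + wx ^ 2 * ‖1 - Complex.exp (Complex.I * (k2 : ℂ))‖ ^ 2)

/-! Write `g k = ‖1 - e^{ik}‖² = 2 - 2 cos k` and `s = ŵ_z²`, `t = ŵ_x²`, so `s + t = 1` and `F` is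
an integral of `log (s g(k₁) + t g(k₂))` over the square. Concavity of `log` bounds this integrand
below by `s log g(k₁) + t log g(k₂)`, whose integral over the square does not depend on `(s, t)`
and equals the value of `F` on the axes `s t = 0`. For `s, t > 0` the concavity gap is strictly
positive wherever `g(k₁) ≠ g(k₂)`; if its integral vanished, `g(k₁) = g(k₂)` would hold for almost
every pair, making `g` almost everywhere constant on `(-π, π]`, which it is not. -/

open Real MeasureTheory Set

section ConvexCombination

variable {a b s t : ℝ}

lemma mul_log_add_mul_log_le_log (ha : 0 < a) (hb : 0 < b) (hs : 0 ≤ s) (ht : 0 ≤ t)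
    (hst : s + t = 1) : s * log a + t * log b ≤ log (s * a + t * b) := by
  simpa using strictConcaveOn_log_Ioi.concaveOn.2 (mem_Ioi.2 ha) (mem_Ioi.2 hb) hs ht hst

lemma mul_log_add_mul_log_lt_log (ha : 0 < a) (hb : 0 < b) (hab : a ≠ b) (hs : 0 < s)
    (ht : 0 < t) (hst : s + t = 1) : s * log a + t * log b < log (s * a + t * b) := by
  simpa using strictConcaveOn_log_Ioi.2 (mem_Ioi.2 ha) (mem_Ioi.2 hb) hab hs ht hst

lemma abs_log_mul_add_mul_le (ha : 0 < a) (hb : 0 < b) (hs : 0 ≤ s) (ht : 0 ≤ t)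
    (hst : s + t = 1) : |log (s * a + t * b)| ≤ |log a| + |log b| := by
  have hlower := mul_log_add_mul_log_le_log ha hb hs ht hst
  have hupper : log (s * a + t * b) ≤ max (log a) (log b) := by
    rcases le_total a b with hab | hab
    · exact (log_le_log (by nlinarith) (by nlinarith)).trans (le_max_right _ _)
    · exact (log_le_log (by nlinarith) (by nlinarith)).trans (le_max_left _ _)
  rw [abs_le]
  constructor
  · nlinarith [neg_abs_le (log a), neg_abs_le (log b), abs_nonneg (log a), abs_nonneg (log b)]
  · exact hupper.trans (max_le (by linarith [le_abs_self (log a), abs_nonneg (log b)])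
      (by linarith [le_abs_self (log b), abs_nonneg (log a)]))

end ConvexCombination

section Product

variable {α : Type*} [MeasurableSpace α] {μ : Measure α} {g : α → ℝ} {s t : ℝ}

lemma ae_eq_const_of_ae_prod_eq {β : Type*} [Nonempty β] [SFinite μ] {f : α → β}
    (h : ∀ᵐ p ∂μ.prod μ, f p.1 = f p.2) : ∃ c, f =ᵐ[μ] fun _ => c := by
  rcases eq_zero_or_neZero μ with rfl | _
  · exact ⟨Classical.arbitrary β, by simp [Filter.EventuallyEq]⟩
  obtain ⟨x, hx⟩ := (Measure.ae_ae_of_ae_prod h).exists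
  exact ⟨f x, hx.mono fun y hy => hy.symm⟩

lemma ae_fst_pos_and_snd_pos (hpos : ∀ᵐ x ∂μ, 0 < g x) :
    ∀ᵐ p ∂μ.prod μ, 0 < g p.1 ∧ 0 < g p.2 :=
  (Measure.quasiMeasurePreserving_fst.ae hpos).and (Measure.quasiMeasurePreserving_snd.ae hpos)

variable [IsFiniteMeasure μ]

lemma integrable_log_mul_add_mul_prod (hg : Measurable g) (hpos : ∀ᵐ x ∂μ, 0 < g x)
    (hlog : Integrable (fun x => log (g x)) μ) (hs : 0 ≤ s) (ht : 0 ≤ t) (hst : s + t = 1) :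
    Integrable (fun p : α × α => log (s * g p.1 + t * g p.2)) (μ.prod μ) := by
  refine Integrable.mono' ((hlog.abs.comp_fst μ).add (hlog.abs.comp_snd μ)) ?_ ?_
  · exact (measurable_log.comp (by fun_prop)).aestronglyMeasurable
  · filter_upwards [ae_fst_pos_and_snd_pos hpos] with p hp
    exact abs_log_mul_add_mul_le hp.1 hp.2 hs ht hst

lemma integral_log_mul_add_mul_prod_of_mul_eq_zero (hst : s + t = 1) (h0 : s * t = 0) :
    ∫ p, log (s * g p.1 + t * g p.2) ∂μ.prod μ = μ.real univ * ∫ x, log (g x) ∂μ := by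
  rcases mul_eq_zero.1 h0 with rfl | rfl
  · obtain rfl : t = 1 := by linarith
    simpa using integral_fun_snd (μ := μ) fun x => log (g x)
  · obtain rfl : s = 1 := by linarith
    simpa using integral_fun_fst (ν := μ) fun x => log (g x)

theorem mul_integral_log_lt_integral_log_mul_add_mul_prod (hg : Measurable g)
    (hpos : ∀ᵐ x ∂μ, 0 < g x) (hlog : Integrable (fun x => log (g x)) μ)
    (hnc : ¬ ∃ c, g =ᵐ[μ] fun _ => c) (hs : 0 < s) (ht : 0 < t) (hst : s + t = 1) :
    μ.real univ * ∫ x, log (g x) ∂μ < ∫ p, log (s * g p.1 + t * g p.2) ∂μ.prod μ := by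
  set mean : α × α → ℝ := fun p => s * log (g p.1) + t * log (g p.2)
  set gap : α × α → ℝ := fun p => log (s * g p.1 + t * g p.2) - mean p
  have hmean_int : Integrable mean (μ.prod μ) :=
    ((hlog.comp_fst μ).const_mul s).add ((hlog.comp_snd μ).const_mul t)
  have hmean : ∫ p, mean p ∂μ.prod μ = μ.real univ * ∫ x, log (g x) ∂μ := by
    rw [integral_add ((hlog.comp_fst μ).const_mul s) ((hlog.comp_snd μ).const_mul t),
      integral_const_mul, integral_const_mul, integral_fun_fst (fun x => log (g x)),
      integral_fun_snd (fun x => log (g x)), smul_eq_mul]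
    linear_combination (μ.real univ * ∫ x, log (g x) ∂μ) * hst
  have hgap_int : Integrable gap (μ.prod μ) :=
    (integrable_log_mul_add_mul_prod hg hpos hlog hs.le ht.le hst).sub hmean_int
  have hgap_nonneg : 0 ≤ᵐ[μ.prod μ] gap := by
    filter_upwards [ae_fst_pos_and_snd_pos hpos] with p hp
    exact sub_nonneg.2 (mul_log_add_mul_log_le_log hp.1 hp.2 hs.le ht.le hst)
  suffices 0 < ∫ p, gap p ∂μ.prod μ by
    rw [integral_sub (integrable_log_mul_add_mul_prod hg hpos hlog hs.le ht.le hst) hmean_int,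
      hmean] at this
    linarith
  refine (integral_nonneg_of_ae hgap_nonneg).lt_of_ne fun hzero => hnc ?_
  refine ae_eq_const_of_ae_prod_eq ?_
  filter_upwards [(integral_eq_zero_iff_of_nonneg_ae hgap_nonneg hgap_int).1 hzero.symm,
    ae_fst_pos_and_snd_pos hpos] with p hp hpos
  by_contra hne
  exact (sub_pos.2 (mul_log_add_mul_log_lt_log hpos.1 hpos.2 hne hs ht hst)).ne' hp

end Product

lemma norm_one_sub_exp_I_mul_sq (k : ℝ) :
    ‖1 - Complex.exp (Complex.I * k)‖ ^ 2 = 2 - 2 * cos k := by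
  rw [norm_sub_rev, Complex.norm_sub_one_sq_eq_of_norm_eq_one (Complex.norm_exp_I_mul_ofReal k),
    mul_comm Complex.I, Complex.exp_ofReal_mul_I_re]
  ring

lemma ae_two_sub_two_mul_cos_pos : ∀ᵐ k : ℝ, 0 < 2 - 2 * cos k := by
  have hzero : {k : ℝ | cos k = 1}.Countable := by
    have : {k : ℝ | cos k = 1} = range fun n : ℤ => n * (2 * π) := by
      ext k; simp [cos_eq_one_iff]
    rw [this]; exact countable_range _
  filter_upwards [measure_eq_zero_iff_ae_notMem.1 (hzero.measure_zero volume)] with k hk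
  linarith [(cos_le_one k).lt_of_ne hk]

lemma intervalIntegrable_log_two_sub_two_mul_cos (a b : ℝ) :
    IntervalIntegrable (fun k => log (2 - 2 * cos k)) volume a b :=
  (analyticOnNhd_const.sub (analyticOnNhd_const.mul analyticOnNhd_cos)).meromorphicOn
    |>.intervalIntegrable_log

lemma not_ae_eq_const_two_sub_two_mul_cos :
    ¬ ∃ c, (fun k => 2 - 2 * cos k) =ᵐ[volume.restrict (Ioc (-π) π)] fun _ => c := by
  rintro ⟨c, hc⟩
  have hEq := Measure.eqOn_Ioc_of_ae_eq volume hc (by fun_prop) continuousOn_const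
  have h0 := hEq (show (0 : ℝ) ∈ Ioc (-π) π from ⟨by linarith [pi_pos], pi_pos.le⟩)
  have hπ := hEq (show π ∈ Ioc (-π) π from ⟨by linarith [pi_pos], le_rfl⟩)
  simp only [cos_zero, cos_pi] at h0 hπ
  linarith

lemma spinWaveF_eq_integral_prod {wx wz : ℝ} (h : wx ^ 2 + wz ^ 2 = 1) :
    spinWaveF wx wz = 1 / 2 * (1 / (2 * π) ^ 2) *
      ∫ p, log (wz ^ 2 * (2 - 2 * cos p.1) + wx ^ 2 * (2 - 2 * cos p.2))
        ∂(volume.restrict (Ioc (-π) π)).prod (volume.restrict (Ioc (-π) π)) := by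
  have hint := integrable_log_mul_add_mul_prod (g := fun k => 2 - 2 * cos k) (by fun_prop)
    (ae_restrict_of_ae ae_two_sub_two_mul_cos_pos)
    (intervalIntegrable_log_two_sub_two_mul_cos (-π) π).1 (sq_nonneg wz) (sq_nonneg wx)
    (by linarith)
  simp only [spinWaveF, norm_one_sub_exp_I_mul_sq, integral_prod _ hint,
    intervalIntegral.integral_of_le (neg_le_self pi_pos.le)]

/-- The spin-wave free energy `F` is minimized, over unit vectors `ŵ` in the `xz`-plane,
only by `ŵ = ±ê_x` and `ŵ = ±ê_z`. -/
theorem spinWaveF_minimized_only_on_axes (wx wz : ℝ) (h : wx ^ 2 + wz ^ 2 = 1) :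
    spinWaveF 1 0 ≤ spinWaveF wx wz
      ∧ (spinWaveF wx wz = spinWaveF 1 0 ↔ wx = 0 ∨ wz = 0) := by
  set μ := volume.restrict (Ioc (-π) π)
  have hpos : ∀ᵐ k ∂μ, 0 < 2 - 2 * cos k := ae_restrict_of_ae ae_two_sub_two_mul_cos_pos
  have hlog := (intervalIntegrable_log_two_sub_two_mul_cos (-π) π).1
  have haxis : ∀ {a b : ℝ}, a ^ 2 + b ^ 2 = 1 → a = 0 ∨ b = 0 →
      spinWaveF a b = 1 / 2 * (1 / (2 * π) ^ 2) * (μ.real univ * ∫ k, log (2 - 2 * cos k) ∂μ) :=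
    fun hab h0 => by
      rw [spinWaveF_eq_integral_prod hab, integral_log_mul_add_mul_prod_of_mul_eq_zero
        (g := fun k => 2 - 2 * cos k) (by linarith) (by rcases h0 with rfl | rfl <;> simp)]
  by_cases haxes : wx = 0 ∨ wz = 0
  · have heq : spinWaveF wx wz = spinWaveF 1 0 := by
      rw [haxis h haxes, haxis (by norm_num) (Or.inr rfl)]
    exact ⟨heq.ge, iff_of_true heq haxes⟩
  · rw [not_or] at haxes
    have hlt : spinWaveF 1 0 < spinWaveF wx wz := by
      rw [haxis (by norm_num) (Or.inr rfl), spinWaveF_eq_integral_prod h]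
      refine mul_lt_mul_of_pos_left ?_ (by positivity)
      exact mul_integral_log_lt_integral_log_mul_add_mul_prod (by fun_prop) hpos hlog
        not_ae_eq_const_two_sub_two_mul_cos (sq_pos_of_ne_zero haxes.2) (sq_pos_of_ne_zero haxes.1)
        (by linarith)
    exact ⟨hlt.le, iff_of_false hlt.ne' (by tauto)⟩
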